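/- arXiv:2008.05429 — 3 statements merged into one kernel-verified Lean document; each statement's English description precedes it below -/
import Mathlib

section
/- Let G be a first-countable topological group, Γ ≤ G a subgroup, (g_n) a sequence in G, and h ∈ G such that g_nΓ → hΓ in the coset space G⧸Γ with the quotient topology. Then for every γ ∈ Γ, the element h γ h⁻¹ belongs to ⋂_{N ∈ ℕ} closure( ⋃_{n ≥ N} { g_n γ' g_n⁻¹ : γ' ∈ Γ } ). In particular this limsup set contains the conjugate subgroup hΓh⁻¹. -/
open Filter Topology

/-! The conjugation map `x ↦ x γ x⁻¹` is continuous and the quotient map `G → G ⧸ Γ` is open, so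
a neighbourhood of `h γ h⁻¹` pulls back to a neighbourhood `V` of `h` whose image is a
neighbourhood of `hΓ`. Hence `g n Γ` meets `V` for all large `n`, say at `v = g n δ` with
`δ ∈ Γ`, and then `v γ v⁻¹ = g n (δ γ δ⁻¹) (g n)⁻¹` is a point of `g n Γ (g n)⁻¹` near `h γ h⁻¹`. -/

theorem mem_iInter_closure_biUnion_Ici_of_frequently {X ι : Type*} [TopologicalSpace X]
    [Preorder ι] [IsDirectedOrder ι] [Nonempty ι] {s : ι → Set X} {x : X}
    (hx : ∀ U ∈ 𝓝 x, ∃ᶠ n in atTop, (U ∩ s n).Nonempty) :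
    x ∈ ⋂ N, closure (⋃ n ∈ Set.Ici N, s n) := by
  refine Set.mem_iInter.2 fun N => mem_closure_iff_nhds.2 fun U hU => ?_
  obtain ⟨n, hNn, y, hyU, hys⟩ := frequently_atTop.1 (hx U hU) N
  exact ⟨y, hyU, Set.mem_biUnion hNn hys⟩

theorem QuotientGroup.exists_conj_eq_of_mk_eq {G : Type*} [Group G] {Γ : Subgroup G}
    {v w : G} (hvw : (v : G ⧸ Γ) = w) {γ : G} (hγ : γ ∈ Γ) :
    ∃ γ' ∈ Γ, v * γ * v⁻¹ = w * γ' * w⁻¹ := by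
  have hδ : w⁻¹ * v ∈ Γ := QuotientGroup.eq.1 hvw.symm
  refine ⟨(w⁻¹ * v) * γ * (w⁻¹ * v)⁻¹, Γ.mul_mem (Γ.mul_mem hδ hγ) (Γ.inv_mem hδ), ?_⟩
  group

theorem QuotientGroup.eventually_mk_mem_image_of_tendsto {G ι : Type*} [Group G]
    [TopologicalSpace G] [SeparatelyContinuousMul G] {Γ : Subgroup G} {l : Filter ι}
    {g : ι → G} {h : G} (hconv : Tendsto (fun n => (g n : G ⧸ Γ)) l (𝓝 (h : G ⧸ Γ)))
    {V : Set G} (hV : V ∈ 𝓝 h) :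
    ∀ᶠ n in l, (g n : G ⧸ Γ) ∈ ((↑) : G → G ⧸ Γ) '' V :=
  hconv (QuotientGroup.isOpenMap_coe.image_mem_nhds hV)

theorem conj_subgroup_subset_limsup_of_tendsto_coset_general {G : Type*} [Group G]
    [TopologicalSpace G] [IsTopologicalGroup G]
    (Γ : Subgroup G) (g : ℕ → G) (h : G)
    (hconv : Tendsto (fun n => ((g n : G) : G ⧸ Γ)) atTop (nhds ((h : G) : G ⧸ Γ))) :
    ∀ γ ∈ Γ, h * γ * h⁻¹ ∈
      ⋂ N : ℕ, closure (⋃ n ∈ Set.Ici N, {x : G | ∃ γ' ∈ Γ, x = g n * γ' * (g n)⁻¹}) := by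
  intro γ hγ
  refine mem_iInter_closure_biUnion_Ici_of_frequently fun U hU => Eventually.frequently ?_
  have hconj : Continuous fun x : G => x * γ * x⁻¹ := by fun_prop
  filter_upwards [QuotientGroup.eventually_mk_mem_image_of_tendsto hconv
    (hconj.continuousAt.preimage_mem_nhds hU)] with n ⟨v, hvU, hv⟩
  exact ⟨v * γ * v⁻¹, hvU, QuotientGroup.exists_conj_eq_of_mk_eq hv hγ⟩

/-- If g_nΓ → hΓ in G⧸Γ (G a first-countable topological group), then
for every γ ∈ Γ the conjugate hγh⁻¹ lies in the topological limsup
⋂_N closure(⋃_{n ≥ N} g_nΓg_n⁻¹); in particular this limsup set contains hΓh⁻¹. -/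
theorem conj_subgroup_subset_limsup_of_tendsto_coset {G : Type*} [Group G]
    [TopologicalSpace G] [IsTopologicalGroup G] [FirstCountableTopology G]
    (Γ : Subgroup G) (g : ℕ → G) (h : G)
    (hconv : Tendsto (fun n => ((g n : G) : G ⧸ Γ)) atTop (nhds ((h : G) : G ⧸ Γ))) :
    ∀ γ ∈ Γ, h * γ * h⁻¹ ∈
      ⋂ N : ℕ, closure (⋃ n ∈ Set.Ici N, {x : G | ∃ γ' ∈ Γ, x = g n * γ' * (g n)⁻¹}) :=
  conj_subgroup_subset_limsup_of_tendsto_coset_general Γ g h hconv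
end

section
/- Let G be a locally compact second-countable Hausdorff topological group, Γ ≤ G a discrete subgroup, Γ' a normal subgroup of Γ of finite index, H ≤ G a subgroup, and π : G⧸Γ' → G⧸Γ the natural projection. The finite group F = Γ⧸Γ' acts on G⧸Γ' on the right by (gΓ') · (γΓ') = gγΓ', and this action commutes with the left translation action of G. Let F₀ ⊆ G⧸Γ' be a Borel set meeting every F-orbit exactly once, and let μ be an H-invariant Radon measure on G⧸Γ. Then the assignment ν(B) = Σ_{ξ ∈ F} μ( π( B ∩ F₀ · ξ ) ) (for Borel B ⊆ G⧸Γ'; each image π(B ∩ F₀·ξ) is Borel since π is injective on F₀·ξ) defines a Radon measure ν on G⧸Γ' that is invariant under the right F-action and under the left H-action, and satisfies Measure.map π ν = [Γ : Γ'] • μ. -/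
open MeasureTheory Pointwise

/-- Radon measure: finite on compacts and inner regular w.r.t. compact sets -/
def IsRadon {X : Type*} [TopologicalSpace X] [MeasurableSpace X] (μ : Measure X) : Prop :=
  (∀ K : Set X, IsCompact K → μ K < ⊤) ∧
  (∀ s : Set X, MeasurableSet s →
    μ s = ⨆ (K : Set X) (_ : IsCompact K) (_ : K ⊆ s), μ K)

/-- the natural projection `G⧸Γ' → G⧸Γ` for `Γ' ≤ Γ`, sending `gΓ'` to `gΓ`. -/
def cosetProj {G : Type*} [Group G] {Γ' Γ : Subgroup G} (hle : Γ' ≤ Γ) :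
    G ⧸ Γ' → G ⧸ Γ :=
  Quotient.map' id (fun _ _ hab =>
    QuotientGroup.leftRel_apply.mpr (hle (QuotientGroup.leftRel_apply.mp hab)))

/-- the right translation `gΓ' ↦ gγΓ'` on `G⧸Γ'` by an element `γ ∈ Γ`; it is
well defined because `Γ'` is normal in `Γ`, and it descends to an action of the
finite group `F = Γ⧸Γ'`. -/
def rightDeck {G : Type*} [Group G] {Γ' Γ : Subgroup G} (hle : Γ' ≤ Γ)
    (hnormal : (Γ'.subgroupOf Γ).Normal) (γ : Γ) : G ⧸ Γ' → G ⧸ Γ' :=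
  Quotient.map' (fun g => g * γ) (fun a b hab => QuotientGroup.leftRel_apply.mpr (by
    have h1 : a⁻¹ * b ∈ Γ' := QuotientGroup.leftRel_apply.mp hab
    have h2 : γ⁻¹ * (⟨a⁻¹ * b, hle h1⟩ : Γ) * γ⁻¹⁻¹ ∈ Γ'.subgroupOf Γ :=
      hnormal.conj_mem ⟨a⁻¹ * b, hle h1⟩
        (by simpa [Subgroup.mem_subgroupOf] using h1) γ⁻¹
    have h3 : (γ : G)⁻¹ * (a⁻¹ * b) * γ ∈ Γ' := by
      simpa [Subgroup.mem_subgroupOf, mul_assoc] using h2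
    simpa [mul_inv_rev, mul_assoc] using h3))

/-- the translate `F₀ · ξ` of a fundamental set `F₀ ⊆ G⧸Γ'` by a class
`ξ ∈ F = Γ⧸Γ'` (as a union over representatives; all representatives give the
same translate). -/
def fundTranslate {G : Type*} [Group G] {Γ' Γ : Subgroup G} (hle : Γ' ≤ Γ)
    (hnormal : (Γ'.subgroupOf Γ).Normal) (F₀ : Set (G ⧸ Γ'))
    (ξ : Γ ⧸ Γ'.subgroupOf Γ) : Set (G ⧸ Γ') :=
  ⋃ γ : Γ, ⋃ (_ : (γ : Γ ⧸ Γ'.subgroupOf Γ) = ξ), rightDeck hle hnormal γ '' F₀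

/-!
The translates `F₀ · ξ` are the sheets of the finite covering `π : G⧸Γ' → G⧸Γ`: `π` maps each
of them bijectively onto `G⧸Γ`, and, `G⧸Γ'` being Polish, the inverse `σ_ξ` is measurable by
Lusin–Souslin. So `ν = ∑ ξ, (σ_ξ)_* μ` is a measure, with `ν A = μ (π A)` whenever `π` is
injective on `A`; by restriction to the sheets it is the only measure with this property for `A`
inside a sheet. A measurable bijection of `G⧸Γ'` lying over a `μ`-preserving bijection of `G⧸Γ`
(a deck transformation over the identity, a translation by `h ∈ H` over itself) keeps `π`
injective on the preimage of such an `A`, so it preserves this characterisation, hence `ν`.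
Each sheet contributes one copy of `μ` to `π_* ν`, and `ν` is finite on compacts because `π_* ν`
is; inner regularity is automatic on a locally compact second-countable space.
-/

open Set Function Topology

theorem Topology.IsDenseEmbedding.isOpen_range_of_locallyCompactSpace {X Y : Type*}
    [TopologicalSpace X] [TopologicalSpace Y] [LocallyCompactSpace X] [T2Space Y] {f : X → Y}
    (hf : IsDenseEmbedding f) : IsOpen (range f) := by
  refine isOpen_iff_mem_nhds.mpr ?_
  rintro _ ⟨x, rfl⟩
  obtain ⟨K, hK, hKx⟩ := exists_compact_mem_nhds x
  rw [hf.isInducing.nhds_eq_comap] at hKx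
  obtain ⟨V, hVx, hVK⟩ := hKx
  obtain ⟨U, hUV, hU, hxU⟩ := mem_nhds_iff.mp hVx
  -- `U ∩ range f` lies in the closed set `f '' K`, and is dense in the open set `U`.
  have hUK : U ⊆ f '' K := by
    refine (hf.dense.open_subset_closure_inter hU).trans ?_
    refine closure_minimal ?_ (hK.image hf.continuous).isClosed
    rintro _ ⟨hyU, z, rfl⟩
    exact ⟨z, hVK (hUV hyU), rfl⟩
  exact Filter.mem_of_superset (hU.mem_nhds hxU) (hUK.trans (image_subset_range f K))

theorem PolishSpace.of_locallyCompactSpace (X : Type*) [TopologicalSpace X]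
    [LocallyCompactSpace X] [SecondCountableTopology X] [T2Space X] : PolishSpace X := by
  let _ : MetricSpace X := TopologicalSpace.metrizableSpaceMetric X
  have hX := UniformSpace.Completion.isDenseEmbedding_coe (α := X)
  have : TopologicalSpace.SeparableSpace (UniformSpace.Completion X) :=
    hX.dense.separableSpace hX.continuous
  have : PolishSpace (range ((↑) : X → UniformSpace.Completion X)) :=
    hX.isOpen_range_of_locallyCompactSpace.polishSpace
  exact hX.isEmbedding.toHomeomorph.isClosedEmbedding.polishSpace

theorem isRadon_of_innerRegular {X : Type*} [TopologicalSpace X] [MeasurableSpace X]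
    (μ : Measure X) [IsFiniteMeasureOnCompacts μ] [μ.InnerRegular] : IsRadon μ := by
  refine ⟨fun K hK => hK.measure_lt_top, fun s hs => ?_⟩
  rw [hs.measure_eq_iSup_isCompact μ]
  exact iSup_congr fun K => iSup_comm

section SheetLift

variable {X Y ι : Type*} [MeasurableSpace X] [MeasurableSpace Y]

structure IsSheetPartition (π : X → Y) (S : ι → Set X) : Prop where
  measurableSet : ∀ i, MeasurableSet (S i)
  injOn : ∀ i, InjOn π (S i)
  image_eq_univ : ∀ i, π '' S i = univ
  pairwise_disjoint : Pairwise (Disjoint on S)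
  iUnion_eq_univ : ⋃ i, S i = univ
  measurableSet_image : ∀ i A, MeasurableSet A → A ⊆ S i → MeasurableSet (π '' A)

noncomputable def sheetLift [Nonempty X] (μ : Measure Y) (π : X → Y) (S : ι → Set X) :
    Measure X :=
  Measure.sum fun i => μ.map (invFunOn π (S i))

namespace IsSheetPartition

variable [Nonempty X] {π : X → Y} {S : ι → Set X}

theorem preimage_invFunOn (hS : IsSheetPartition π S) (i : ι) (B : Set X) :
    invFunOn π (S i) ⁻¹' B = π '' (B ∩ S i) := by
  ext y
  have hy : y ∈ π '' S i := by rw [hS.image_eq_univ i]; trivial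
  constructor
  · exact fun hyB => ⟨_, ⟨hyB, invFunOn_mem hy⟩, invFunOn_eq hy⟩
  · rintro ⟨x, ⟨hxB, hxS⟩, rfl⟩
    rwa [mem_preimage, (hS.injOn i).leftInvOn_invFunOn hxS]

theorem measurable_invFunOn (hS : IsSheetPartition π S) (i : ι) :
    Measurable (invFunOn π (S i)) := fun B hB => by
  rw [hS.preimage_invFunOn]
  exact hS.measurableSet_image i _ (hB.inter (hS.measurableSet i)) inter_subset_right

theorem sheetLift_apply (hS : IsSheetPartition π S) (μ : Measure Y) {B : Set X}
    (hB : MeasurableSet B) : sheetLift μ π S B = ∑' i, μ (π '' (B ∩ S i)) := by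
  simp only [sheetLift, Measure.sum_apply _ hB, Measure.map_apply (hS.measurable_invFunOn _) hB,
    hS.preimage_invFunOn]

theorem sheetLift_apply_of_injOn [Countable ι] (hS : IsSheetPartition π S) (μ : Measure Y)
    {A : Set X} (hA : MeasurableSet A) (hinj : InjOn π A) :
    sheetLift μ π S A = μ (π '' A) := by
  have hdecomp : π '' A = ⋃ i, π '' (A ∩ S i) := by
    rw [← image_iUnion, ← inter_iUnion, hS.iUnion_eq_univ, inter_univ]
  rw [hS.sheetLift_apply μ hA, hdecomp, measure_iUnion]
  · exact fun i j hij => ((hS.pairwise_disjoint hij).mono inter_subset_right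
      inter_subset_right).image hinj inter_subset_left inter_subset_left
  · exact fun i => hS.measurableSet_image i _ (hA.inter (hS.measurableSet i)) inter_subset_right

theorem eq_sheetLift [Countable ι] (hS : IsSheetPartition π S) {μ : Measure Y}
    {ρ : Measure X} (hρ : ∀ i A, MeasurableSet A → A ⊆ S i → ρ A = μ (π '' A)) :
    ρ = sheetLift μ π S := by
  refine Measure.ext_of_iUnion_eq_univ hS.iUnion_eq_univ fun i => Measure.ext fun B hB => ?_
  have hBS := hB.inter (hS.measurableSet i)
  rw [Measure.restrict_apply hB, Measure.restrict_apply hB, hρ i _ hBS inter_subset_right,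
    hS.sheetLift_apply_of_injOn μ hBS ((hS.injOn i).mono inter_subset_right)]

theorem map_sheetLift_of_semiconj [Countable ι] (hS : IsSheetPartition π S) {μ : Measure Y}
    (e : X ≃ᵐ X) (e' : Y ≃ᵐ Y) (hsemi : ∀ x, π (e x) = e' (π x))
    (hμ : μ.map e' = μ) :
    (sheetLift μ π S).map e = sheetLift μ π S := by
  refine hS.eq_sheetLift fun i A hA hAS => ?_
  have hinj : InjOn π (e ⁻¹' A) := fun x hx y hy hxy =>
    e.injective (hS.injOn i (hAS hx) (hAS hy) (by rw [hsemi, hsemi, hxy]))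
  have himage : π '' (e ⁻¹' A) = e' ⁻¹' (π '' A) := by
    ext y
    constructor
    · rintro ⟨x, hx, rfl⟩
      exact ⟨e x, hx, hsemi x⟩
    · rintro ⟨a, ha, hay⟩
      refine ⟨e.symm a, by simpa using ha, e'.injective ?_⟩
      rw [← hsemi, e.apply_symm_apply, hay]
  rw [e.map_apply, hS.sheetLift_apply_of_injOn μ (e.measurable hA) hinj, himage,
    ← e'.map_apply, hμ]

theorem map_sheetLift [Finite ι] (hS : IsSheetPartition π S) (hπ : Measurable π)
    (μ : Measure Y) : (sheetLift μ π S).map π = Nat.card ι • μ := by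
  ext A hA
  rw [Measure.map_apply hπ hA, hS.sheetLift_apply μ (hπ hA)]
  simp only [image_preimage_inter, hS.image_eq_univ, inter_univ, ENNReal.tsum_const,
    ENat.card_eq_coe_natCard, Measure.smul_apply, nsmul_eq_mul]
  rfl

theorem isFiniteMeasureOnCompacts_sheetLift [Finite ι] [TopologicalSpace X]
    [TopologicalSpace Y] [OpensMeasurableSpace X] [T2Space Y] [BorelSpace Y]
    (hS : IsSheetPartition π S) (hπ : Continuous π) (μ : Measure Y)
    [IsFiniteMeasureOnCompacts μ] :
    IsFiniteMeasureOnCompacts (sheetLift μ π S) := by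
  refine ⟨fun K hK => ?_⟩
  have hπK : IsClosed (π '' K) := (hK.image hπ).isClosed
  calc sheetLift μ π S K ≤ sheetLift μ π S (π ⁻¹' (π '' K)) :=
        measure_mono (subset_preimage_image π K)
    _ = (Nat.card ι • μ) (π '' K) := by
      rw [← hS.map_sheetLift hπ.measurable, Measure.map_apply hπ.measurable hπK.measurableSet]
    _ < ⊤ := by
      rw [Measure.smul_apply, nsmul_eq_mul]
      exact ENNReal.mul_lt_top (ENNReal.natCast_lt_top _) (hK.image hπ).measure_lt_top

end IsSheetPartition

end SheetLift

section DeckTransformations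

variable {G : Type*} [Group G] {Γ' Γ : Subgroup G} (hle : Γ' ≤ Γ)
  (hnormal : (Γ'.subgroupOf Γ).Normal)

theorem rightDeck_mk (γ : Γ) (a : G) :
    rightDeck hle hnormal γ (a : G ⧸ Γ') = ((a * γ : G) : G ⧸ Γ') := rfl

theorem cosetProj_mk (a : G) : cosetProj hle (a : G ⧸ Γ') = (a : G ⧸ Γ) := rfl

theorem rightDeck_rightDeck (γ δ : Γ) (x : G ⧸ Γ') :
    rightDeck hle hnormal γ (rightDeck hle hnormal δ x) = rightDeck hle hnormal (δ * γ) x := by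
  induction x using QuotientGroup.induction_on with
  | H a => simp only [rightDeck_mk, Subgroup.coe_mul, mul_assoc]

theorem rightDeck_one (x : G ⧸ Γ') : rightDeck hle hnormal 1 x = x := by
  induction x using QuotientGroup.induction_on with
  | H a => simp only [rightDeck_mk, OneMemClass.coe_one, mul_one]

theorem rightDeck_inv_rightDeck (γ : Γ) (x : G ⧸ Γ') :
    rightDeck hle hnormal γ⁻¹ (rightDeck hle hnormal γ x) = x := by
  rw [rightDeck_rightDeck, mul_inv_cancel, rightDeck_one]

theorem rightDeck_rightDeck_inv (γ : Γ) (x : G ⧸ Γ') :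
    rightDeck hle hnormal γ (rightDeck hle hnormal γ⁻¹ x) = x := by
  rw [rightDeck_rightDeck, inv_mul_cancel, rightDeck_one]

theorem smul_rightDeck (g : G) (γ : Γ) (x : G ⧸ Γ') :
    g • rightDeck hle hnormal γ x = rightDeck hle hnormal γ (g • x) := by
  induction x using QuotientGroup.induction_on with
  | H a => simp only [rightDeck_mk, MulAction.Quotient.smul_mk, smul_eq_mul, mul_assoc]

theorem cosetProj_smul (g : G) (x : G ⧸ Γ') :
    cosetProj hle (g • x) = g • cosetProj hle x := by
  induction x using QuotientGroup.induction_on with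
  | H a => simp only [cosetProj_mk, MulAction.Quotient.smul_mk]

theorem cosetProj_rightDeck (γ : Γ) (x : G ⧸ Γ') :
    cosetProj hle (rightDeck hle hnormal γ x) = cosetProj hle x := by
  induction x using QuotientGroup.induction_on with
  | H a => simp [rightDeck_mk, cosetProj_mk]

theorem cosetProj_eq_cosetProj_iff (x y : G ⧸ Γ') :
    cosetProj hle x = cosetProj hle y ↔ ∃ γ : Γ, rightDeck hle hnormal γ x = y := by
  refine ⟨fun h => ?_, fun ⟨γ, hγ⟩ => hγ ▸ (cosetProj_rightDeck hle hnormal γ x).symm⟩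
  induction x using QuotientGroup.induction_on with | H a =>
  induction y using QuotientGroup.induction_on with | H b =>
  exact ⟨⟨a⁻¹ * b, QuotientGroup.eq.mp h⟩, by simp [rightDeck_mk]⟩

theorem rightDeck_eq_rightDeck_iff (γ δ : Γ) (x : G ⧸ Γ') :
    rightDeck hle hnormal γ x = rightDeck hle hnormal δ x ↔
      (γ : Γ ⧸ Γ'.subgroupOf Γ) = δ := by
  induction x using QuotientGroup.induction_on with
  | H a => simp [rightDeck_mk, QuotientGroup.eq, Subgroup.mem_subgroupOf, mul_assoc]

theorem fundTranslate_mk (F₀ : Set (G ⧸ Γ')) (δ : Γ) :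
    fundTranslate hle hnormal F₀ δ = rightDeck hle hnormal δ '' F₀ := by
  refine Subset.antisymm (iUnion₂_subset fun γ hγ => ?_)
    (subset_iUnion₂_of_subset δ rfl le_rfl)
  rw [funext fun x => (rightDeck_eq_rightDeck_iff hle hnormal γ δ x).mpr hγ]

end DeckTransformations

section FundamentalSet

variable {G : Type*} [Group G] {Γ' Γ : Subgroup G} (hle : Γ' ≤ Γ)
  (hnormal : (Γ'.subgroupOf Γ).Normal) {F₀ : Set (G ⧸ Γ')}

def IsDeckFundamentalSet (F₀ : Set (G ⧸ Γ')) : Prop :=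
  ∀ x : G ⧸ Γ', ∃! y : G ⧸ Γ', y ∈ F₀ ∧ ∃ γ : Γ, rightDeck hle hnormal γ x = y

variable {hle hnormal}

theorem IsDeckFundamentalSet.rightDeck_eq_self (hF : IsDeckFundamentalSet hle hnormal F₀)
    {y : G ⧸ Γ'} (hy : y ∈ F₀) {γ : Γ} (hγy : rightDeck hle hnormal γ y ∈ F₀) :
    rightDeck hle hnormal γ y = y :=
  (hF y).unique ⟨hγy, γ, rfl⟩ ⟨hy, 1, rightDeck_one hle hnormal y⟩

theorem IsDeckFundamentalSet.injOn_cosetProj (hF : IsDeckFundamentalSet hle hnormal F₀)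
    (ξ : Γ ⧸ Γ'.subgroupOf Γ) :
    InjOn (cosetProj hle) (fundTranslate hle hnormal F₀ ξ) := by
  induction ξ using QuotientGroup.induction_on with | H δ =>
  rw [fundTranslate_mk]
  rintro _ ⟨a, ha, rfl⟩ _ ⟨b, hb, rfl⟩ hab
  rw [cosetProj_rightDeck, cosetProj_rightDeck, cosetProj_eq_cosetProj_iff hle hnormal] at hab
  obtain ⟨γ, rfl⟩ := hab
  rw [hF.rightDeck_eq_self ha hb]

theorem IsDeckFundamentalSet.image_cosetProj (hF : IsDeckFundamentalSet hle hnormal F₀)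
    (ξ : Γ ⧸ Γ'.subgroupOf Γ) :
    cosetProj hle '' fundTranslate hle hnormal F₀ ξ = univ := by
  induction ξ using QuotientGroup.induction_on with | H δ =>
  refine eq_univ_of_forall fun u => ?_
  induction u using QuotientGroup.induction_on with | H a =>
  obtain ⟨y, ⟨hy, γ, rfl⟩, -⟩ := hF (a : G ⧸ Γ')
  refine ⟨rightDeck hle hnormal δ (rightDeck hle hnormal γ a), ?_, ?_⟩
  · rw [fundTranslate_mk]
    exact mem_image_of_mem _ hy
  · rw [cosetProj_rightDeck, cosetProj_rightDeck, cosetProj_mk]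

theorem IsDeckFundamentalSet.iUnion_fundTranslate (hF : IsDeckFundamentalSet hle hnormal F₀) :
    ⋃ ξ, fundTranslate hle hnormal F₀ ξ = univ := by
  refine eq_univ_of_forall fun x => mem_iUnion.mpr ?_
  obtain ⟨y, ⟨hy, γ, rfl⟩, -⟩ := hF x
  refine ⟨(γ⁻¹ : Γ), ?_⟩
  rw [fundTranslate_mk]
  exact ⟨_, hy, rightDeck_inv_rightDeck hle hnormal γ x⟩

theorem IsDeckFundamentalSet.pairwise_disjoint_fundTranslate
    (hF : IsDeckFundamentalSet hle hnormal F₀) :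
    Pairwise (Disjoint on fundTranslate hle hnormal F₀) := by
  intro ξ η hξη
  induction ξ using QuotientGroup.induction_on with | H δ =>
  induction η using QuotientGroup.induction_on with | H ε =>
  rw [onFun, fundTranslate_mk, fundTranslate_mk, disjoint_left]
  rintro _ ⟨a, ha, rfl⟩ ⟨b, hb, hba⟩
  -- `b` and `a` lie in `F₀` and in the same orbit, hence coincide.
  have hab : rightDeck hle hnormal (δ * ε⁻¹) a = b := by
    rw [← rightDeck_rightDeck, ← hba, rightDeck_inv_rightDeck]
  rw [← hab, hF.rightDeck_eq_self ha (hab ▸ hb), rightDeck_eq_rightDeck_iff] at hba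
  exact hξη hba.symm

end FundamentalSet

section Topology

variable {G : Type*} [Group G] [TopologicalSpace G] {Γ' Γ : Subgroup G} (hle : Γ' ≤ Γ)
  (hnormal : (Γ'.subgroupOf Γ).Normal)

theorem continuous_cosetProj : Continuous (cosetProj hle) :=
  (QuotientGroup.isQuotientMap_mk Γ').continuous_iff.mpr QuotientGroup.continuous_mk

theorem continuous_rightDeck [ContinuousMul G] (γ : Γ) : Continuous (rightDeck hle hnormal γ) :=
  (QuotientGroup.isQuotientMap_mk Γ').continuous_iff.mpr
    (QuotientGroup.continuous_mk.comp (continuous_mul_const (γ : G)))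

def rightDeckHomeomorph [ContinuousMul G] (γ : Γ) : G ⧸ Γ' ≃ₜ G ⧸ Γ' where
  toFun := rightDeck hle hnormal γ
  invFun := rightDeck hle hnormal γ⁻¹
  left_inv := rightDeck_inv_rightDeck hle hnormal γ
  right_inv := rightDeck_rightDeck_inv hle hnormal γ
  continuous_toFun := continuous_rightDeck hle hnormal γ
  continuous_invFun := continuous_rightDeck hle hnormal γ⁻¹

end Topology

theorem IsDeckFundamentalSet.isSheetPartition {G : Type*} [Group G] [TopologicalSpace G]
    [ContinuousMul G] {Γ' Γ : Subgroup G} {hle : Γ' ≤ Γ}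
    {hnormal : (Γ'.subgroupOf Γ).Normal}
    [MeasurableSpace (G ⧸ Γ)] [OpensMeasurableSpace (G ⧸ Γ)] [T2Space (G ⧸ Γ)]
    [MeasurableSpace (G ⧸ Γ')] [BorelSpace (G ⧸ Γ')] [PolishSpace (G ⧸ Γ')]
    {F₀ : Set (G ⧸ Γ')} (hF : IsDeckFundamentalSet hle hnormal F₀)
    (hF₀ : MeasurableSet F₀) :
    IsSheetPartition (cosetProj hle) (fundTranslate hle hnormal F₀) where
  measurableSet ξ := by
    induction ξ using QuotientGroup.induction_on with | H δ =>
    rw [fundTranslate_mk]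
    exact (rightDeckHomeomorph hle hnormal δ).toMeasurableEquiv.measurableSet_image.mpr hF₀
  injOn := hF.injOn_cosetProj
  image_eq_univ := hF.image_cosetProj
  pairwise_disjoint := hF.pairwise_disjoint_fundTranslate
  iUnion_eq_univ := hF.iUnion_fundTranslate
  measurableSet_image ξ _ hA hAξ :=
    hA.image_of_continuousOn_injOn (continuous_cosetProj hle).continuousOn
      ((hF.injOn_cosetProj ξ).mono hAξ)

/-- The right action of the finite group F = Γ⧸Γ' on G⧸Γ' commutes
with the left G-action, and given a Borel fundamental set F₀ for this action and an
H-invariant Radon measure μ on G⧸Γ, the assignment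
ν(B) = Σ_{ξ ∈ F} μ(π(B ∩ F₀·ξ)) defines a Radon measure on G⧸Γ' which is invariant
under the right F-action and the left H-action and pushes forward to [Γ:Γ']·μ. -/
theorem canonical_deck_invariant_lift {G : Type*} [Group G] [TopologicalSpace G]
    [IsTopologicalGroup G] [LocallyCompactSpace G] [SecondCountableTopology G] [T2Space G]
    (Γ' Γ : Subgroup G) [DiscreteTopology Γ] (hle : Γ' ≤ Γ)
    (hnormal : (Γ'.subgroupOf Γ).Normal) (hindex : Γ'.relIndex Γ ≠ 0)
    (H : Subgroup G)
    [MeasurableSpace (G ⧸ Γ)] [BorelSpace (G ⧸ Γ)]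
    [MeasurableSpace (G ⧸ Γ')] [BorelSpace (G ⧸ Γ')]
    (F₀ : Set (G ⧸ Γ')) (hF₀meas : MeasurableSet F₀)
    (hF₀fund : ∀ x : G ⧸ Γ', ∃! y : G ⧸ Γ',
      y ∈ F₀ ∧ ∃ γ : Γ, rightDeck hle hnormal γ x = y)
    (μ : Measure (G ⧸ Γ)) (hRadon : IsRadon μ)
    (hinv : ∀ h ∈ H, Measure.map ((h : G) • · : G ⧸ Γ → G ⧸ Γ) μ = μ) :
    (∀ (g : G) (γ : Γ) (x : G ⧸ Γ'),
      g • rightDeck hle hnormal γ x = rightDeck hle hnormal γ (g • x)) ∧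
    ∃ ν : Measure (G ⧸ Γ'),
      (∀ B : Set (G ⧸ Γ'), MeasurableSet B →
        ν B = ∑' ξ : Γ ⧸ Γ'.subgroupOf Γ,
          μ (cosetProj hle '' (B ∩ fundTranslate hle hnormal F₀ ξ))) ∧
      IsRadon ν ∧
      (∀ γ : Γ, Measure.map (rightDeck hle hnormal γ) ν = ν) ∧
      (∀ h ∈ H, Measure.map ((h : G) • · : G ⧸ Γ' → G ⧸ Γ') ν = ν) ∧
      Measure.map (cosetProj hle) ν = (Γ'.relIndex Γ) • μ := by
  have : DiscreteTopology Γ' :=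
    .of_continuous_injective (continuous_subtype_val.subtype_mk _)
      (Subgroup.inclusion_injective hle)
  have : IsClosed (Γ' : Set G) := Subgroup.isClosed_of_discrete
  have : IsClosed (Γ : Set G) := Subgroup.isClosed_of_discrete
  have : PolishSpace (G ⧸ Γ') := .of_locallyCompactSpace _
  have : Finite (Γ ⧸ Γ'.subgroupOf Γ) := Nat.finite_of_card_ne_zero hindex
  have : IsFiniteMeasureOnCompacts μ := ⟨hRadon.1⟩
  have hS := IsDeckFundamentalSet.isSheetPartition hF₀fund hF₀meas
  have := hS.isFiniteMeasureOnCompacts_sheetLift (continuous_cosetProj hle) μ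
  refine ⟨smul_rightDeck hle hnormal,
    sheetLift μ (cosetProj hle) (fundTranslate hle hnormal F₀),
    fun B hB => hS.sheetLift_apply μ hB, isRadon_of_innerRegular _, fun γ => ?_, fun h hH => ?_,
    hS.map_sheetLift (continuous_cosetProj hle).measurable μ⟩
  · exact hS.map_sheetLift_of_semiconj (rightDeckHomeomorph hle hnormal γ).toMeasurableEquiv
      (.refl _) (cosetProj_rightDeck hle hnormal γ) Measure.map_id
  · exact hS.map_sheetLift_of_semiconj (Homeomorph.smul (h : G)).toMeasurableEquiv
      (Homeomorph.smul (h : G)).toMeasurableEquiv (cosetProj_smul hle h) (hinv h hH)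
end

section
/- Let Γ ≤ SL₂(ℂ) be a discrete subgroup and let μ be a Radon measure on SL₂(ℂ)⧸Γ that is U-invariant, U-ergodic, and quasi-invariant under every element of the diagonal subgroup D. Then there exists α ∈ ℝ such that for every λ ∈ ℂ with λ ≠ 0, Measure.map (d_λ • ·) μ = |λ|^{2α} • μ, where d_λ = [[λ, 0], [0, λ⁻¹]]. In particular μ is invariant under every d_λ with |λ| = 1. -/
open MeasureTheory Matrix Filter Topology Pointwise

noncomputable section

abbrev SL2C := Matrix.SpecialLinearGroup (Fin 2) ℂ

instance : TopologicalSpace SL2C :=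
  TopologicalSpace.induced (fun g : SL2C => (g : Matrix (Fin 2) (Fin 2) ℂ)) inferInstance

instance : MeasurableSpace SL2C := borel _
instance : BorelSpace SL2C := ⟨rfl⟩

instance (Γ : Subgroup SL2C) : MeasurableSpace (SL2C ⧸ Γ) := borel _
instance (Γ : Subgroup SL2C) : BorelSpace (SL2C ⧸ Γ) := ⟨rfl⟩

/-- membership in the unipotent upper triangular subgroup U -/
def IsUnip (g : SL2C) : Prop := g.1 1 0 = 0 ∧ g.1 0 0 = 1 ∧ g.1 1 1 = 1

/-- membership in the upper triangular (Borel) subgroup B -/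
def IsUpper (g : SL2C) : Prop := g.1 1 0 = 0

/-- membership in the diagonal subgroup D -/
def IsDiag (g : SL2C) : Prop := g.1 1 0 = 0 ∧ g.1 0 1 = 0

/-- Zariski density of a subset of SL₂(ℂ) -/
def ZariskiDense (S : Set SL2C) : Prop :=
  ∀ p : MvPolynomial (Fin 2 × Fin 2) ℂ,
    (∀ g ∈ S, MvPolynomial.eval (fun ij => g.1 ij.1 ij.2) p = 0) →
    ∀ g : SL2C, MvPolynomial.eval (fun ij => g.1 ij.1 ij.2) p = 0

/-- U-invariance of a measure on SL₂(ℂ)⧸Γ -/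
def UInvariant {Γ : Subgroup SL2C} (μ : Measure (SL2C ⧸ Γ)) : Prop :=
  ∀ u : SL2C, IsUnip u → Measure.map (u • ·) μ = μ

/-- U-ergodicity of a measure on SL₂(ℂ)⧸Γ -/
def UErgodic {Γ : Subgroup SL2C} (μ : Measure (SL2C ⧸ Γ)) : Prop :=
  ∀ s : Set (SL2C ⧸ Γ), MeasurableSet s → (∀ u : SL2C, IsUnip u → u • s = s) →
    μ s = 0 ∨ μ sᶜ = 0

/-- quasi-invariance of a measure under a group element -/
def QuasiInvariantUnder {Γ : Subgroup SL2C} (g : SL2C) (μ : Measure (SL2C ⧸ Γ)) : Prop :=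
  (Measure.map (g • ·) μ).AbsolutelyContinuous μ ∧
    μ.AbsolutelyContinuous (Measure.map (g • ·) μ)

/-- μ is supported on a single U-orbit -/
def SupportedOnSingleUOrbit {Γ : Subgroup SL2C} (μ : Measure (SL2C ⧸ Γ)) : Prop :=
  ∃ x : SL2C ⧸ Γ, μ ({y | ∃ u : SL2C, IsUnip u ∧ y = u • x}ᶜ) = 0

/-!
Since `d_λ` normalises `U`, the measure `d_λ • μ` is again `U`-invariant; it is absolutely
continuous with respect to `μ`, so its Radon–Nikodym derivative is `U`-invariant and hence
constant by ergodicity (an a.e.-invariant set becomes strictly invariant after averaging over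
`U ≅ ℂ` with Fubini). Thus `d_λ • μ = χ(λ) μ` for a character `χ : ℂˣ → ℝ≥0∞`. Comparing the
measures of `d_λ⁻¹ • K` and `K` for a compact `K` of positive measure bounds `χ` on an annulus
around the unit circle, so `w ↦ log χ(exp w)` is an additive map `ℂ → ℝ` bounded near `0`. It is
therefore `ℝ`-linear, and it vanishes at `2πi`, whence `χ(λ) = |λ|^{2α}`.
-/

open scoped ENNReal

instance : IsTopologicalGroup SL2C := Matrix.SpecialLinearGroup.topologicalGroup

instance : LocallyCompactSpace SL2C :=
  have : LocallyCompactSpace (Matrix (Fin 2) (Fin 2) ℂ) :=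
    inferInstanceAs (LocallyCompactSpace (Fin 2 → Fin 2 → ℂ))
  Matrix.SpecialLinearGroup.isClosedEmbedding_val.locallyCompactSpace

instance : SecondCountableTopology SL2C :=
  have : SecondCountableTopology (Matrix (Fin 2) (Fin 2) ℂ) :=
    inferInstanceAs (SecondCountableTopology (Fin 2 → Fin 2 → ℂ))
  Matrix.SpecialLinearGroup.isClosedEmbedding_val.isEmbedding.secondCountableTopology

section ErgodicAction

variable {G X : Type*} [MeasurableSpace X]

@[to_additive]
theorem exists_smul_invariant_ae_eq [Group G] [MeasurableSpace G] [MeasurableMul G] [MulAction G X]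
    [MeasurableSMul₂ G X] (ν : Measure G) [SFinite ν] [ν.IsMulRightInvariant] [NeZero ν]
    {μ : Measure X} [SFinite μ] {s : Set X} (hs : MeasurableSet s)
    (h : ∀ g : G, (g • ·) ⁻¹' s =ᵐ[μ] s) :
    ∃ t, MeasurableSet t ∧ (∀ g : G, (g • ·) ⁻¹' t = t) ∧ t =ᵐ[μ] s := by
  have hA : MeasurableSet {p : G × X | p.1 • p.2 ∈ s} := measurable_smul hs
  refine ⟨{x | ∀ᵐ g ∂ν, g • x ∈ s}, ?_, fun g ↦ ?_, ?_⟩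
  · simp only [ae_iff]
    exact measurable_measure_prodMk_right hA.compl (measurableSet_singleton 0)
  · ext x
    simpa only [Set.mem_preimage, Set.mem_ofPred_eq, smul_smul] using
      eventually_mul_right_iff ν g (p := (· • x ∈ s))
  · have hiff : MeasurableSet {p : G × X | p.1 • p.2 ∈ s ↔ p.2 ∈ s} :=
      (measurable_smul hs).iff (measurable_snd hs)
    have hsec : ∀ᵐ x ∂μ, ∀ᵐ g ∂ν, (g • x ∈ s ↔ x ∈ s) :=
      (Measure.ae_ae_comm hiff).1 (ae_of_all _ fun g ↦ Filter.eventuallyEq_set.1 (h g))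
    filter_upwards [hsec] with x hx
    exact propext ((eventually_congr hx).trans eventually_const)

@[to_additive]
theorem ErgodicSMul.of_forall_smul_invariant [Group G] [MeasurableSpace G] [MeasurableMul G]
    [MulAction G X] [MeasurableSMul₂ G X] (ν : Measure G) [SFinite ν] [ν.IsMulRightInvariant]
    [NeZero ν] {μ : Measure X} [SFinite μ] [SMulInvariantMeasure G X μ]
    (h : ∀ s, MeasurableSet s → (∀ g : G, (g • ·) ⁻¹' s = s) → EventuallyConst s (ae μ)) :
    ErgodicSMul G X μ where
  aeconst_of_forall_preimage_smul_ae_eq hs hinv := by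
    obtain ⟨t, ht, htinv, hts⟩ := exists_smul_invariant_ae_eq ν hs hinv
    exact (h t ht htinv).congr hts

@[to_additive]
theorem ErgodicSMul.exists_ae_eq_const_of_ae_eq_comp {Y : Type*} [SMul G X] {μ : Measure X}
    [ErgodicSMul G X μ] [MeasurableSpace Y] [Nonempty Y] [MeasurableSpace.CountablySeparated Y]
    {f : X → Y} (hf : Measurable f) (h : ∀ g : G, f ∘ (g • ·) =ᵐ[μ] f) :
    ∃ c, f =ᵐ[μ] Function.const X c :=
  exists_eventuallyEq_const_of_forall_separating MeasurableSet fun U hU ↦ eventuallyConst_set.1 <|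
    MeasureTheory.aeconst_of_forall_preimage_smul_ae_eq G (hf hU).nullMeasurableSet
      fun g ↦ (h g).preimage U

@[to_additive ErgodicVAdd.exists_eq_smul_of_absolutelyContinuous]
theorem ErgodicSMul.exists_eq_smul_of_absolutelyContinuous [Group G] [MulAction G X]
    [MeasurableConstSMul G X] {μ ν : Measure X} [ErgodicSMul G X μ] [SigmaFinite μ]
    [SigmaFinite ν] [SMulInvariantMeasure G X ν] (hνμ : ν ≪ μ) : ∃ c : ℝ≥0∞, ν = c • μ := by
  have hinv (g : G) : ν.rnDeriv μ ∘ (g • ·) =ᵐ[μ] ν.rnDeriv μ := by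
    simpa only [Function.comp_def, MeasureTheory.map_smul] using
      (measurableEmbedding_const_smul g).rnDeriv_map ν μ
  obtain ⟨c, hc⟩ := exists_ae_eq_const_of_ae_eq_comp (Measure.measurable_rnDeriv ν μ) hinv
  refine ⟨c, ?_⟩
  rw [← Measure.withDensity_rnDeriv_eq ν μ hνμ, withDensity_congr_ae hc]
  exact withDensity_const c

end ErgodicAction

def unipChar : AddChar ℂ SL2C where
  toFun z := ⟨!![1, z; 0, 1], by simp [Matrix.det_fin_two_of]⟩
  map_zero_eq_one' := by ext i j; fin_cases i <;> fin_cases j <;> rfl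
  map_add_eq_mul' z w := by
    refine Subtype.ext ?_
    change _ = !![1, z; 0, 1] * !![1, w; 0, 1]
    simp [add_comm]

def diagHom : ℂˣ →* SL2C where
  toFun a := ⟨!![(a : ℂ), 0; 0, ((a⁻¹ : ℂˣ) : ℂ)], by simp [Matrix.det_fin_two_of]⟩
  map_one' := by ext i j; fin_cases i <;> fin_cases j <;> simp
  map_mul' a b := by
    refine Subtype.ext ?_
    change _ = !![(a : ℂ), 0; 0, ((a⁻¹ : ℂˣ) : ℂ)] * !![(b : ℂ), 0; 0, ((b⁻¹ : ℂˣ) : ℂ)]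
    simp [mul_comm]

@[simp] lemma coe_unipChar (z : ℂ) : (unipChar z : Matrix (Fin 2) (Fin 2) ℂ) = !![1, z; 0, 1] := rfl

@[simp] lemma coe_diagHom (a : ℂˣ) :
    (diagHom a : Matrix (Fin 2) (Fin 2) ℂ) = !![(a : ℂ), 0; 0, ((a⁻¹ : ℂˣ) : ℂ)] := rfl

lemma isUnip_unipChar (z : ℂ) : IsUnip (unipChar z) := ⟨rfl, rfl, rfl⟩

lemma IsUnip.exists_eq_unipChar {g : SL2C} (hg : IsUnip g) : ∃ z, g = unipChar z := by
  obtain ⟨h10, h00, h11⟩ := hg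
  refine ⟨g.1 0 1, ?_⟩
  ext i j
  fin_cases i <;> fin_cases j <;> simp [h10, h00, h11]

lemma isDiag_diagHom (a : ℂˣ) : IsDiag (diagHom a) := ⟨rfl, rfl⟩

lemma diagHom_apply_zero_zero (a : ℂˣ) : (diagHom a).1 0 0 = a := rfl

lemma IsDiag.exists_eq_diagHom {g : SL2C} (hg : IsDiag g) : ∃ a, g = diagHom a := by
  obtain ⟨h10, h01⟩ := hg
  have hdet : g.1 0 0 * g.1 1 1 = 1 := by
    have := g.2
    rwa [Matrix.det_fin_two, h10, h01, mul_zero, sub_zero] at this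
  refine ⟨Units.mkOfMulEqOne _ _ hdet, ?_⟩
  ext i j
  fin_cases i <;> fin_cases j <;> simp [h10, h01, eq_inv_of_mul_eq_one_right hdet]

lemma unipChar_mul_diagHom (z : ℂ) (a : ℂˣ) :
    unipChar z * diagHom a = diagHom a * unipChar (z / (a : ℂ) ^ 2) := by
  ext : 1
  simp [Matrix.SpecialLinearGroup.coe_mul]
  field_simp

lemma continuous_unipChar : Continuous unipChar := by
  refine Continuous.subtype_mk (continuous_matrix fun i j ↦ ?_) _
  fin_cases i <;> fin_cases j <;> simp <;> fun_prop

def expUnit (w : ℂ) : ℂˣ := Units.mk0 (Complex.exp w) (Complex.exp_ne_zero w)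

@[simp] lemma coe_expUnit (w : ℂ) : (expUnit w : ℂ) = Complex.exp w := rfl

lemma expUnit_add (z w : ℂ) : expUnit (z + w) = expUnit z * expUnit w :=
  Units.ext (Complex.exp_add z w)

lemma expUnit_log (a : ℂˣ) : expUnit (Complex.log a) = a :=
  Units.ext (Complex.exp_log a.ne_zero)

lemma continuous_diagHom_expUnit : Continuous fun w ↦ diagHom (expUnit w) := by
  refine Continuous.subtype_mk (continuous_matrix fun i j ↦ ?_) _
  fin_cases i <;> fin_cases j <;> simp [← Complex.exp_neg] <;> fun_prop

section UnipotentFlow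

variable {Γ : Subgroup SL2C}

/-- The action of `U ≅ ℂ`, so that U-invariance and U-ergodicity become `VAddInvariantMeasure ℂ`
and `ErgodicVAdd ℂ`. -/
instance : AddAction ℂ (SL2C ⧸ Γ) where
  vadd z x := unipChar z • x
  zero_vadd x := by simp [HVAdd.hVAdd]
  add_vadd z w x := by simp [HVAdd.hVAdd, AddChar.map_add_eq_mul, mul_smul]

lemma vadd_eq_unipChar_smul (z : ℂ) (x : SL2C ⧸ Γ) : z +ᵥ x = unipChar z • x := rfl

instance : MeasurableVAdd₂ ℂ (SL2C ⧸ Γ) :=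
  ⟨((continuous_unipChar.comp continuous_fst).smul continuous_snd).measurable⟩

lemma UInvariant.vaddInvariantMeasure {μ : Measure (SL2C ⧸ Γ)} (h : UInvariant μ) :
    VAddInvariantMeasure ℂ (SL2C ⧸ Γ) μ :=
  ⟨fun z s hs ↦ by
    rw [← Measure.map_apply (measurable_const_vadd z) hs]
    exact congrArg (· s) (h _ (isUnip_unipChar z))⟩

lemma UErgodic.ergodicVAdd {μ : Measure (SL2C ⧸ Γ)} [SFinite μ] (hErg : UErgodic μ)
    (hInv : UInvariant μ) : ErgodicVAdd ℂ (SL2C ⧸ Γ) μ :=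
  have := hInv.vaddInvariantMeasure
  .of_forall_vadd_invariant volume fun s hs hinv ↦ by
    refine eventuallyConst_set.2 ((hErg s hs fun u hu ↦ ?_).symm.imp ?_ ?_)
    · obtain ⟨z, rfl⟩ := hu.exists_eq_unipChar
      rw [← Set.preimage_smul_inv, ← AddChar.map_neg_eq_inv]
      exact hinv (-z)
    · exact mem_ae_iff.2
    · exact measure_eq_zero_iff_ae_notMem.1

lemma vaddInvariantMeasure_map_diagHom_smul (μ : Measure (SL2C ⧸ Γ))
    [VAddInvariantMeasure ℂ (SL2C ⧸ Γ) μ] (a : ℂˣ) :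
    VAddInvariantMeasure ℂ (SL2C ⧸ Γ) (Measure.map (diagHom a • ·) μ) := by
  refine ((vaddInvariantMeasure_tfae ℂ _).out 0 5).2 fun z ↦ ?_
  have hconj : (z +ᵥ · : SL2C ⧸ Γ → SL2C ⧸ Γ) ∘ (diagHom a • ·) =
      (diagHom a • ·) ∘ ((z / (a : ℂ) ^ 2) +ᵥ ·) := by
    ext x
    simp only [Function.comp_apply, vadd_eq_unipChar_smul, smul_smul, unipChar_mul_diagHom]
  rw [Measure.map_map (measurable_const_vadd z) (measurable_const_smul _), hconj,
    ← Measure.map_map (measurable_const_smul _) (measurable_const_vadd _), MeasureTheory.map_vadd]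

theorem exists_map_diagHom_smul_eq_smul {μ : Measure (SL2C ⧸ Γ)} [SigmaFinite μ]
    [ErgodicVAdd ℂ (SL2C ⧸ Γ) μ] (a : ℂˣ) (hac : Measure.map (diagHom a • ·) μ ≪ μ) :
    ∃ c : ℝ≥0∞, Measure.map (diagHom a • ·) μ = c • μ :=
  have : SigmaFinite (Measure.map (diagHom a • ·) μ) :=
    (MeasurableEquiv.smul (diagHom a)).sigmaFinite_map
  have := vaddInvariantMeasure_map_diagHom_smul μ a
  ErgodicVAdd.exists_eq_smul_of_absolutelyContinuous (G := ℂ) hac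

end UnipotentFlow

theorem exists_monoidHom_map_smul_eq_smul {M G X : Type*} [Monoid M] [Monoid G] [MulAction G X]
    [MeasurableSpace X] [MeasurableConstSMul G X] (ρ : M →* G) {μ : Measure X} {s : Set X}
    (hs₀ : μ s ≠ 0) (hs : μ s ≠ ∞) (h : ∀ m, ∃ c : ℝ≥0∞, Measure.map (ρ m • ·) μ = c • μ) :
    ∃ χ : M →* ℝ≥0∞, ∀ m, Measure.map (ρ m • ·) μ = χ m • μ := by
  choose c hc using h
  have cancel {x y : ℝ≥0∞} (hxy : x • μ = y • μ) : x = y :=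
    (ENNReal.mul_left_inj hs₀ hs).1 (by simpa using congrArg (· s) hxy)
  refine ⟨{ toFun := c, map_one' := cancel ?_, map_mul' := fun m n ↦ cancel ?_ }, hc⟩
  · simp [← hc]
  · rw [← hc, mul_comm, ← smul_smul, ← hc, ← Measure.map_smul, ← hc,
      Measure.map_map (measurable_const_smul _) (measurable_const_smul _)]
    simp [Function.comp_def, mul_smul]

theorem exists_le_of_map_smul_eq_smul {G X : Type*} [Group G] [TopologicalSpace G]
    [ContinuousInv G] [TopologicalSpace X] [MulAction G X] [ContinuousSMul G X] [MeasurableSpace X]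
    [MeasurableConstSMul G X] (μ : Measure X) [IsFiniteMeasureOnCompacts μ] {K : Set X}
    (hK : IsCompact K) (hK₀ : μ K ≠ 0) {L : Set G} (hL : IsCompact L) :
    ∃ B ≠ ∞, ∀ g ∈ L, ∀ c : ℝ≥0∞, Measure.map (g • ·) μ = c • μ → c ≤ B := by
  refine ⟨μ (L⁻¹ • K) / μ K, ENNReal.div_ne_top (hL.inv.smul_set hK).measure_lt_top.ne hK₀,
    fun g hg c hc ↦ ?_⟩
  rw [ENNReal.le_div_iff_mul_le (.inl hK₀) (.inl hK.measure_lt_top.ne)]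
  calc c * μ K = Measure.map (g • ·) μ K := by rw [hc]; rfl
    _ = μ (g⁻¹ • K) := by rw [(measurableEmbedding_const_smul g).map_apply, Set.preimage_smul]
    _ ≤ μ (L⁻¹ • K) := measure_mono (Set.smul_set_subset_smul (Set.inv_mem_inv.2 hg))

theorem IsRadon.exists_isCompact_measure_ne_zero {X : Type*} [TopologicalSpace X]
    [MeasurableSpace X] {μ : Measure X} (h : IsRadon μ) (hμ : μ ≠ 0) :
    ∃ K, IsCompact K ∧ μ K ≠ 0 := by
  by_contra! hK
  refine hμ (Measure.measure_univ_eq_zero.1 ?_)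
  simpa [h.2 Set.univ MeasurableSet.univ] using hK

theorem MonoidHom.exists_eq_ofReal_norm_rpow (χ : ℂˣ →* ℝ≥0∞) {B : ℝ≥0∞} (hB : B ≠ ∞)
    (hχ : ∀ a : ℂˣ, |Real.log ‖(a : ℂ)‖| ≤ 1 → χ a ≤ B) :
    ∃ α : ℝ, ∀ a : ℂˣ, χ a = ENNReal.ofReal (‖(a : ℂ)‖ ^ α) := by
  have hχ_ne (a : ℂˣ) : χ a ≠ 0 ∧ χ a ≠ ∞ := ENNReal.isUnit_iff.1 ((Group.isUnit a).map χ)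
  have hχ_pos (a : ℂˣ) : 0 < (χ a).toReal := ENNReal.toReal_pos (hχ_ne a).1 (hχ_ne a).2
  let ψ : ℂ →+ ℝ := AddMonoidHom.mk' (fun w ↦ Real.log (χ (expUnit w)).toReal) fun z w ↦ by
    rw [expUnit_add, map_mul, ENNReal.toReal_mul,
      Real.log_mul (hχ_pos _).ne' (hχ_pos _).ne']
  have hψ_le {w : ℂ} (hw : ‖w‖ ≤ 1) : ψ w ≤ Real.log B.toReal := by
    refine Real.log_le_log (hχ_pos _) (ENNReal.toReal_mono hB (hχ _ ?_))
    simpa [Complex.norm_exp] using (Complex.abs_re_le_norm w).trans hw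
  have hψ_cont : Continuous ψ := by
    refine ψ.continuous_of_isBounded_nhds_zero (Metric.closedBall_mem_nhds 0 one_pos)
      (isBounded_iff_forall_norm_le.2 ⟨Real.log B.toReal, ?_⟩)
    rintro _ ⟨w, hw, rfl⟩
    rw [mem_closedBall_zero_iff] at hw
    have hneg := hψ_le (w := -w) (by rwa [norm_neg])
    exact abs_le.2 ⟨by linarith [ψ.map_neg w], hψ_le hw⟩
  have hψ_I : ψ Complex.I = 0 := by
    have h2π : ψ ((2 * Real.pi : ℝ) • Complex.I) = 0 := by
      have : expUnit (2 * Real.pi * Complex.I) = 1 := Units.ext Complex.exp_two_pi_mul_I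
      change Real.log (χ (expUnit _)).toReal = 0
      rw [Complex.real_smul, Complex.ofReal_mul, Complex.ofReal_ofNat, this, map_one,
        ENNReal.toReal_one, Real.log_one]
    rw [map_real_smul ψ hψ_cont, smul_eq_mul] at h2π
    exact (mul_eq_zero.1 h2π).resolve_left (by positivity)
  have hψ (w : ℂ) : ψ w = w.re * ψ 1 := by
    have hw : w = w.re • (1 : ℂ) + w.im • Complex.I := by simp [Complex.real_smul]
    conv_lhs => rw [hw, map_add, map_real_smul ψ hψ_cont, map_real_smul ψ hψ_cont, hψ_I]
    simp
  refine ⟨ψ 1, fun a ↦ ?_⟩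
  have hlog : Real.log (χ a).toReal = Real.log ‖(a : ℂ)‖ * ψ 1 := by
    simpa [ψ, expUnit_log, Complex.log_re] using hψ (Complex.log a)
  rw [Real.rpow_def_of_pos (norm_pos_iff.2 a.ne_zero), ← hlog, Real.exp_log (hχ_pos a),
    ENNReal.ofReal_toReal (hχ_ne a).2]

theorem exists_isCompact_forall_diagHom_mem :
    ∃ L : Set SL2C, IsCompact L ∧ ∀ a : ℂˣ, |Real.log ‖(a : ℂ)‖| ≤ 1 → diagHom a ∈ L := by
  refine ⟨(fun w ↦ diagHom (expUnit w)) '' (Set.Icc (-1) 1 ×ℂ Set.Icc (-Real.pi) Real.pi),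
    ((isCompact_Icc.reProdIm isCompact_Icc).image continuous_diagHom_expUnit),
    fun a ha ↦ ⟨Complex.log a, Complex.mem_reProdIm.2 ⟨?_, ?_⟩, congrArg diagHom (expUnit_log a)⟩⟩
  · rwa [Complex.log_re, Set.mem_Icc, ← abs_le]
  · exact ⟨(Complex.neg_pi_lt_log_im a).le, Complex.log_im_le_pi a⟩

theorem diagonal_character_of_quasi_invariance_general
    (Γ : Subgroup SL2C)
    (μ : Measure (SL2C ⧸ Γ)) (hRadon : IsRadon μ)
    (hInv : UInvariant μ) (hErg : UErgodic μ)
    (hQI : ∀ d : SL2C, IsDiag d → QuasiInvariantUnder d μ) :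
    ∃ α : ℝ,
      (∀ d : SL2C, IsDiag d →
        Measure.map (d • ·) μ = ENNReal.ofReal (‖d.1 0 0‖ ^ (2 * α)) • μ) ∧
      (∀ d : SL2C, IsDiag d → ‖d.1 0 0‖ = 1 →
        Measure.map (d • ·) μ = μ) := by
  obtain rfl | hμ := eq_or_ne μ 0
  · exact ⟨0, fun _ _ ↦ by simp, fun _ _ _ ↦ by simp⟩
  have : IsFiniteMeasureOnCompacts μ := ⟨hRadon.1⟩
  have := hErg.ergodicVAdd hInv
  obtain ⟨K, hK, hK₀⟩ := hRadon.exists_isCompact_measure_ne_zero hμ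
  obtain ⟨χ, hχ⟩ := exists_monoidHom_map_smul_eq_smul diagHom hK₀ hK.measure_lt_top.ne
    fun a ↦ exists_map_diagHom_smul_eq_smul a (hQI _ (isDiag_diagHom a)).1
  obtain ⟨L, hL, hdL⟩ := exists_isCompact_forall_diagHom_mem
  obtain ⟨B, hB, hLB⟩ := exists_le_of_map_smul_eq_smul μ hK hK₀ hL
  obtain ⟨α, hα⟩ := χ.exists_eq_ofReal_norm_rpow hB fun a ha ↦ hLB _ (hdL a ha) _ (hχ a)
  have hmap (d : SL2C) (hd : IsDiag d) :
      Measure.map (d • ·) μ = ENNReal.ofReal (‖d.1 0 0‖ ^ (2 * (α / 2))) • μ := by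
    obtain ⟨a, rfl⟩ := hd.exists_eq_diagHom
    rw [hχ, hα, diagHom_apply_zero_zero, mul_div_cancel₀ α two_ne_zero]
  refine ⟨α / 2, hmap, fun d hd hd₁ ↦ ?_⟩
  rw [hmap d hd, hd₁, Real.one_rpow, ENNReal.ofReal_one, one_smul]

/-- A U-invariant, U-ergodic Radon measure on SL₂(ℂ)⧸Γ which is
quasi-invariant under the diagonal subgroup D transforms under D by a character:
there is α ∈ ℝ with d_λ•μ = |λ|^{2α} μ for all λ ≠ 0 (d_λ = [[λ,0],[0,λ⁻¹]], whose
(0,0) entry is λ); in particular μ is invariant under every d_λ with |λ| = 1. -/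
theorem diagonal_character_of_quasi_invariance
    (Γ : Subgroup SL2C) [DiscreteTopology Γ]
    (μ : Measure (SL2C ⧸ Γ)) (hRadon : IsRadon μ)
    (hInv : UInvariant μ) (hErg : UErgodic μ)
    (hQI : ∀ d : SL2C, IsDiag d → QuasiInvariantUnder d μ) :
    ∃ α : ℝ,
      (∀ d : SL2C, IsDiag d →
        Measure.map (d • ·) μ = ENNReal.ofReal (‖d.1 0 0‖ ^ (2 * α)) • μ) ∧
      (∀ d : SL2C, IsDiag d → ‖d.1 0 0‖ = 1 →
        Measure.map (d • ·) μ = μ) :=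
  diagonal_character_of_quasi_invariance_general Γ μ hRadon hInv hErg hQI
end
end
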